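/- Let m ≥ 2 and let n_1, …, n_m be positive integers and τ_1, …, τ_m nonnegative integers with n_m + τ_m ≥ τ_{j+1} > n_j + τ_j for j = 1, …, m−1. Then Q_m(y) = ∏_{j=1}^{m−1} [ (n_m+τ_m−n_j−τ_j)! / ( (n_m+τ_m−τ_{j+1})! (τ_{j+1}−n_j−τ_j−1)! ) ] · ∫_0^1 ⋯ ∫_0^1 ∏_{j=1}^{m−1} (1 − y u_j u_{j+1} ⋯ u_{m−1})^{n_j} u_j^{n_m+τ_m−τ_{j+1}} (1−u_j)^{τ_{j+1}−n_j−τ_j−1} du_1 ⋯ du_{m−1}; consequently 0 ≤ Q_m(y) ≤ 1 for all y ∈ [0,1]. -/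

import Mathlib

/-! Expanding each factor `(1 - y u_j ⋯ u_{m-1})^{n_j}` by the binomial theorem turns the
integrand into a finite sum of products of one-variable monomials `u_j^A (1 - u_j)^B`, whose
integrals over the cube are products of Beta integrals `A! B! / (A + B + 1)!`. Multiplied by
the prefactor, these Beta values are exactly the Pochhammer quotients of `Q_m`, since
`(c + 1)_K = (c + K)! / c!` and `(-n)_k / k! = (-1)^k C(n, k)`.
For `y ∈ [0, 1]` the integrand is nonnegative and decreasing in `y`, so
`0 ≤ Q_m(y) ≤ Q_m(0) = 1`. -/

open Finset MeasureTheory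

/-- The polynomial `Q_m(y)` (with parameters `n_1,…,n_m`, `τ_1,…,τ_m`, indexed from 1), for
`m ≥ 2`:
`Q_m(y) = ∑_{k_1=0}^{n_1} ⋯ ∑_{k_{m−1}=0}^{n_{m−1}} ∏_{j=1}^{m−1}
  (−n_j)_{k_j} (1+n_m+τ_m−τ_{j+1})_{k_1+⋯+k_j} /
    (k_j! (1+n_m+τ_m−n_j−τ_j)_{k_1+⋯+k_j}) · y^{k_j}`. -/
noncomputable def Q (m : ℕ) (n τ : ℕ → ℕ) (y : ℝ) : ℝ :=
  ∑ k ∈ Fintype.piFinset (fun j : Fin (m - 1) => Finset.range (n (j.1 + 1) + 1)),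
    ∏ j : Fin (m - 1),
      ((ascPochhammer ℝ (k j)).eval (-(n (j.1 + 1) : ℝ)) *
          (ascPochhammer ℝ
              (∑ i ∈ Finset.univ.filter fun i : Fin (m - 1) => i ≤ j, k i)).eval
            ((1 : ℝ) + n m + τ m - τ (j.1 + 2)) /
          (((k j).factorial : ℝ) *
            (ascPochhammer ℝ
                (∑ i ∈ Finset.univ.filter fun i : Fin (m - 1) => i ≤ j, k i)).eval
              ((1 : ℝ) + n m + τ m - n (j.1 + 1) - τ (j.1 + 1))) *
        y ^ k j)

open scoped Nat

theorem integral_Icc_pow_mul_one_sub_pow (a b : ℕ) :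
    ∫ x in Set.Icc (0 : ℝ) 1, x ^ a * (1 - x) ^ b = (a ! * b ! : ℝ) / (a + b + 1)! := by
  have hB : Complex.betaIntegral (a + 1) (b + 1) =
      ((∫ x in (0 : ℝ)..1, x ^ a * (1 - x) ^ b : ℝ) : ℂ) := by
    rw [Complex.betaIntegral, ← intervalIntegral.integral_ofReal]
    refine intervalIntegral.integral_congr fun x _ => ?_
    simp [← Complex.cpow_natCast]
  have hΓ := Complex.Gamma_mul_Gamma_eq_betaIntegral (s := a + 1) (t := b + 1)
    (by simp; positivity) (by simp; positivity)
  rw [show (a + 1 : ℂ) + (b + 1) = ((a + b + 1 : ℕ) : ℂ) + 1 by push_cast; ring,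
    Complex.Gamma_nat_eq_factorial, Complex.Gamma_nat_eq_factorial,
    Complex.Gamma_nat_eq_factorial, hB] at hΓ
  rw [integral_Icc_eq_integral_Ioc, ← intervalIntegral.integral_of_le zero_le_one,
    eq_div_iff (by positivity), mul_comm]
  exact_mod_cast hΓ.symm

theorem ascPochhammer_eval_neg_natCast (N k : ℕ) :
    (ascPochhammer ℝ k).eval (-(N : ℝ)) = (-1) ^ k * k ! * N.choose k := by
  rw [ascPochhammer_eval_neg_eq_descPochhammer, descPochhammer_eval_eq_descFactorial,
    Nat.descFactorial_eq_factorial_mul_choose]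
  push_cast
  ring

theorem ascPochhammer_eval_natCast_add_one (c K : ℕ) :
    (ascPochhammer ℝ K).eval ((c : ℝ) + 1) = ((c + K)! : ℝ) / c ! := by
  rw [eq_div_iff (by positivity), ← Nat.factorial_mul_ascFactorial, ← Nat.cast_add_one,
    ascPochhammer_nat_eq_natCast_ascFactorial]
  push_cast
  ring

theorem setIntegral_univ_pi_prod {ι : Type*} [Fintype ι] (s : ι → Set ℝ) (g : ι → ℝ → ℝ) :
    ∫ u in Set.univ.pi s, ∏ i, g i (u i) = ∏ i, ∫ x in s i, g i x := by
  rw [volume_pi, Measure.restrict_pi_pi, integral_fintype_prod_eq_prod]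

theorem prod_prod_filter_le_pow {ι M : Type*} [Fintype ι] [LE ι] [DecidableLE ι] [CommMonoid M]
    (u : ι → M) (k : ι → ℕ) :
    ∏ j, (∏ i ∈ univ.filter (j ≤ ·), u i) ^ k j = ∏ i, u i ^ ∑ j ∈ univ.filter (· ≤ i), k j := by
  simp_rw [← prod_pow, ← prod_pow_eq_pow_sum]
  exact prod_comm' (by simp)

theorem one_sub_mul_prod_nonneg {ι : Type*} {y : ℝ} {u : ι → ℝ} (hy : y ∈ Set.Icc (0 : ℝ) 1)
    (hu : ∀ i, u i ∈ Set.Icc (0 : ℝ) 1) (s : Finset ι) : 0 ≤ 1 - y * ∏ i ∈ s, u i := by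
  have h0 : 0 ≤ ∏ i ∈ s, u i := prod_nonneg fun i _ => (hu i).1
  have h1 : ∏ i ∈ s, u i ≤ 1 := prod_le_one (fun i _ => (hu i).1) fun i _ => (hu i).2
  nlinarith [hy.1, hy.2]

variable {ι : Type*} [Fintype ι] [LinearOrder ι]

noncomputable def nestedHypergeometric (N : ι → ℕ) (α β : ι → ℝ) (y : ℝ) : ℝ :=
  ∑ k ∈ Fintype.piFinset (fun j => range (N j + 1)),
    ∏ j, ((ascPochhammer ℝ (k j)).eval (-(N j : ℝ)) *
          (ascPochhammer ℝ (∑ i ∈ univ.filter fun i => i ≤ j, k i)).eval (α j) /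
          ((k j)! * (ascPochhammer ℝ (∑ i ∈ univ.filter fun i => i ≤ j, k i)).eval (β j)) *
        y ^ k j)

def nestedIntegrand (N a b : ι → ℕ) (y : ℝ) (u : ι → ℝ) : ℝ :=
  ∏ j, (1 - y * ∏ i ∈ univ.filter fun i => j ≤ i, u i) ^ N j * u j ^ a j * (1 - u j) ^ b j

theorem nestedIntegrand_eq_sum (N a b : ι → ℕ) (y : ℝ) (u : ι → ℝ) :
    nestedIntegrand N a b y u = ∑ k ∈ Fintype.piFinset (fun j => range (N j + 1)),
      (∏ j, ((N j).choose (k j) : ℝ) * (-y) ^ k j) *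
        ∏ j, u j ^ (a j + ∑ i ∈ univ.filter (· ≤ j), k i) * (1 - u j) ^ b j := by
  have binomial (j : ι) (x : ℝ) : (1 - y * x) ^ N j =
      ∑ kj ∈ range (N j + 1), ((N j).choose kj : ℝ) * (-y) ^ kj * x ^ kj := by
    rw [sub_eq_neg_add, add_pow]
    exact sum_congr rfl fun kj _ => by ring
  simp_rw [nestedIntegrand, binomial, sum_mul, prod_univ_sum]
  refine sum_congr rfl fun k _ => ?_
  simp_rw [pow_add, mul_assoc, prod_mul_distrib, ← prod_prod_filter_le_pow u k]
  ring

theorem continuous_nestedIntegrand (N a b : ι → ℕ) (y : ℝ) :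
    Continuous (nestedIntegrand N a b y) := by
  unfold nestedIntegrand
  fun_prop

theorem integral_nestedIntegrand (N a b : ι → ℕ) (y : ℝ) :
    ∫ u in Set.univ.pi fun _ => Set.Icc (0 : ℝ) 1, nestedIntegrand N a b y u =
      ∑ k ∈ Fintype.piFinset (fun j => range (N j + 1)),
        (∏ j, ((N j).choose (k j) : ℝ) * (-y) ^ k j) *
          ∏ j, ((a j + ∑ i ∈ univ.filter (· ≤ j), k i)! * (b j)! : ℝ) /
            (a j + ∑ i ∈ univ.filter (· ≤ j), k i + b j + 1)! := by
  simp_rw [nestedIntegrand_eq_sum]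
  rw [integral_finsetSum]
  · refine sum_congr rfl fun k _ => ?_
    rw [integral_const_mul, setIntegral_univ_pi_prod (fun _ => Set.Icc 0 1)
      (fun j x => x ^ (a j + ∑ i ∈ univ.filter (· ≤ j), k i) * (1 - x) ^ b j)]
    simp_rw [integral_Icc_pow_mul_one_sub_pow]
  · intro k _
    refine ContinuousOn.integrableOn_compact (isCompact_univ_pi fun _ => isCompact_Icc) ?_
    fun_prop

theorem ascPochhammer_ratio_eq_choose_mul_beta (N a b k K : ℕ) (y : ℝ) :
    (ascPochhammer ℝ k).eval (-(N : ℝ)) * (ascPochhammer ℝ K).eval ((a : ℝ) + 1) /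
        (k ! * (ascPochhammer ℝ K).eval ((a : ℝ) + b + 2)) * y ^ k =
      ((a + b + 1)! : ℝ) / (a ! * b !) *
        ((N.choose k : ℝ) * (-y) ^ k * ((a + K)! * b ! / (a + K + b + 1)!)) := by
  rw [show (a : ℝ) + b + 2 = ((a + b + 1 : ℕ) : ℝ) + 1 by push_cast; ring,
    ascPochhammer_eval_neg_natCast, ascPochhammer_eval_natCast_add_one,
    ascPochhammer_eval_natCast_add_one, show a + b + 1 + K = a + K + b + 1 by ring, neg_pow y]
  field_simp

theorem nestedHypergeometric_eq_integral (N a b : ι → ℕ) (y : ℝ) :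
    nestedHypergeometric N (fun j => a j + 1) (fun j => a j + b j + 2) y =
      (∏ j, ((a j + b j + 1)! : ℝ) / ((a j)! * (b j)!)) *
        ∫ u in Set.univ.pi fun _ => Set.Icc (0 : ℝ) 1, nestedIntegrand N a b y u := by
  rw [integral_nestedIntegrand, mul_sum]
  refine sum_congr rfl fun k _ => ?_
  rw [← prod_mul_distrib, ← prod_mul_distrib]
  exact prod_congr rfl fun j _ => ascPochhammer_ratio_eq_choose_mul_beta _ _ _ _ _ y

theorem nestedHypergeometric_zero (N : ι → ℕ) (α β : ι → ℝ) :
    nestedHypergeometric N α β 0 = 1 := by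
  rw [nestedHypergeometric, sum_eq_single 0]
  · simp
  · intro k _ hk
    obtain ⟨j, hj⟩ := Function.ne_iff.mp hk
    exact prod_eq_zero (mem_univ j) (by rw [zero_pow (by simpa using hj), mul_zero])
  · simp

section Bounds

variable (N a b : ι → ℕ) {y : ℝ} {u : ι → ℝ}

theorem nestedIntegrand_factor_nonneg (hy : y ∈ Set.Icc (0 : ℝ) 1)
    (hu : u ∈ Set.univ.pi fun _ => Set.Icc (0 : ℝ) 1) (j : ι) :
    0 ≤ (1 - y * ∏ i ∈ univ.filter fun i => j ≤ i, u i) ^ N j * u j ^ a j * (1 - u j) ^ b j := by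
  have hu0 := (hu j trivial).1
  have hu1 := sub_nonneg.2 (hu j trivial).2
  have := one_sub_mul_prod_nonneg hy (fun i => hu i trivial) (univ.filter fun i => j ≤ i)
  positivity

theorem nestedIntegrand_nonneg (hy : y ∈ Set.Icc (0 : ℝ) 1)
    (hu : u ∈ Set.univ.pi fun _ => Set.Icc (0 : ℝ) 1) : 0 ≤ nestedIntegrand N a b y u :=
  prod_nonneg fun j _ => nestedIntegrand_factor_nonneg N a b hy hu j

theorem nestedIntegrand_le_nestedIntegrand_zero (hy : y ∈ Set.Icc (0 : ℝ) 1)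
    (hu : u ∈ Set.univ.pi fun _ => Set.Icc (0 : ℝ) 1) :
    nestedIntegrand N a b y u ≤ nestedIntegrand N a b 0 u := by
  unfold nestedIntegrand
  gcongr with j
  · exact fun j _ => nestedIntegrand_factor_nonneg N a b hy hu j
  · exact pow_nonneg (sub_nonneg.2 (hu j trivial).2) _
  · exact pow_nonneg (hu j trivial).1 _
  · exact one_sub_mul_prod_nonneg hy (fun i => hu i trivial) _
  · exact prod_nonneg fun i _ => (hu i trivial).1
  · exact hy.1

end Bounds

theorem nestedHypergeometric_mem_Icc (N a b : ι → ℕ) {y : ℝ} (hy : y ∈ Set.Icc (0 : ℝ) 1) :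
    nestedHypergeometric N (fun j => a j + 1) (fun j => a j + b j + 2) y ∈ Set.Icc (0 : ℝ) 1 := by
  have hbox : MeasurableSet (Set.univ.pi fun _ : ι => Set.Icc (0 : ℝ) 1) :=
    .univ_pi fun _ => measurableSet_Icc
  have hint (y : ℝ) :
      IntegrableOn (nestedIntegrand N a b y) (Set.univ.pi fun _ => Set.Icc (0 : ℝ) 1) :=
    (continuous_nestedIntegrand N a b y).continuousOn.integrableOn_compact
      (isCompact_univ_pi fun _ => isCompact_Icc)
  have hC : 0 ≤ ∏ j, ((a j + b j + 1)! : ℝ) / ((a j)! * (b j)!) := by positivity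
  rw [nestedHypergeometric_eq_integral]
  constructor
  · exact mul_nonneg hC (setIntegral_nonneg hbox fun u hu => nestedIntegrand_nonneg N a b hy hu)
  · calc _ ≤ (∏ j, ((a j + b j + 1)! : ℝ) / ((a j)! * (b j)!)) *
          ∫ u in Set.univ.pi fun _ => Set.Icc (0 : ℝ) 1, nestedIntegrand N a b 0 u :=
          mul_le_mul_of_nonneg_left (setIntegral_mono_on (hint y) (hint 0) hbox fun u hu =>
            nestedIntegrand_le_nestedIntegrand_zero N a b hy hu) hC
      _ = 1 := by rw [← nestedHypergeometric_eq_integral, nestedHypergeometric_zero]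

theorem prod_Icc_one_sub_one_eq_prod_fin {M : Type*} [CommMonoid M] (f : ℕ → M) (m : ℕ) :
    ∏ j ∈ Icc 1 (m - 1), f j = ∏ j : Fin (m - 1), f (j + 1) := by
  rw [Fin.prod_univ_eq_prod_range (fun j => f (j + 1)), range_eq_Ico, prod_Ico_add' f 0 (m - 1) 1,
    Ico_add_one_right_eq_Icc]

theorem Q_eq_nestedHypergeometric (m : ℕ) (n τ : ℕ → ℕ)
    (hup : ∀ j : Fin (m - 1), τ (j.1 + 2) ≤ n m + τ m)
    (hlow : ∀ j : Fin (m - 1), n (j.1 + 1) + τ (j.1 + 1) < τ (j.1 + 2)) :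
    Q m n τ = nestedHypergeometric (fun j : Fin (m - 1) => n (j.1 + 1))
      (fun j => ((n m + τ m - τ (j.1 + 2) : ℕ) : ℝ) + 1)
      (fun j => ((n m + τ m - τ (j.1 + 2) : ℕ) : ℝ) +
        (τ (j.1 + 2) - n (j.1 + 1) - τ (j.1 + 1) - 1 : ℕ) + 2) := by
  show nestedHypergeometric _ _ _ = _
  congr <;> funext j
  · rw [Nat.cast_sub (hup j)]
    push_cast
    ring
  · rw [Nat.cast_sub (hup j), Nat.sub_sub, Nat.sub_sub, Nat.cast_sub (by have := hlow j; omega)]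
    push_cast
    ring

theorem stmt_19_general (m : ℕ) (n τ : ℕ → ℕ)
    (hup : ∀ j, 1 ≤ j → j ≤ m - 1 → τ (j + 1) ≤ n m + τ m)
    (hlow : ∀ j, 1 ≤ j → j ≤ m - 1 → n j + τ j < τ (j + 1)) :
    (∀ y : ℝ,
      Q m n τ y =
        (∏ j ∈ Finset.Icc 1 (m - 1),
            ((n m + τ m - n j - τ j).factorial : ℝ) /
              (((n m + τ m - τ (j + 1)).factorial : ℝ) *
                ((τ (j + 1) - n j - τ j - 1).factorial : ℝ))) *
          ∫ u in Set.pi Set.univ (fun _ : Fin (m - 1) => Set.Icc (0 : ℝ) 1),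
            ∏ j : Fin (m - 1),
              (1 - y * ∏ i ∈ Finset.univ.filter fun i : Fin (m - 1) => j ≤ i, u i) ^
                  (n (j.1 + 1)) *
                u j ^ (n m + τ m - τ (j.1 + 2)) *
                (1 - u j) ^ (τ (j.1 + 2) - n (j.1 + 1) - τ (j.1 + 1) - 1)) ∧
    ∀ y ∈ Set.Icc (0 : ℝ) 1, 0 ≤ Q m n τ y ∧ Q m n τ y ≤ 1 := by
  have hup' (j : Fin (m - 1)) : τ (j.1 + 2) ≤ n m + τ m := hup (j.1 + 1) (by omega) (by omega)
  have hlow' (j : Fin (m - 1)) : n (j.1 + 1) + τ (j.1 + 1) < τ (j.1 + 2) :=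
    hlow (j.1 + 1) (by omega) (by omega)
  rw [Q_eq_nestedHypergeometric m n τ hup' hlow', prod_Icc_one_sub_one_eq_prod_fin]
  refine ⟨fun y => ?_, fun y hy => nestedHypergeometric_mem_Icc _ _ _ hy⟩
  rw [nestedHypergeometric_eq_integral]
  congr 1
  refine prod_congr rfl fun j _ => ?_
  rw [show n m + τ m - n (j + 1) - τ (j + 1) =
    n m + τ m - τ (j + 2) + (τ (j + 2) - n (j + 1) - τ (j + 1) - 1) + 1 by
      have := hup' j; have := hlow' j; omega]

theorem stmt_19 (m : ℕ) (hm : 2 ≤ m) (n τ : ℕ → ℕ)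
    (hn : ∀ j, 1 ≤ j → j ≤ m → 0 < n j)
    (hup : ∀ j, 1 ≤ j → j ≤ m - 1 → τ (j + 1) ≤ n m + τ m)
    (hlow : ∀ j, 1 ≤ j → j ≤ m - 1 → n j + τ j < τ (j + 1)) :
    (∀ y : ℝ,
      Q m n τ y =
        (∏ j ∈ Finset.Icc 1 (m - 1),
            ((n m + τ m - n j - τ j).factorial : ℝ) /
              (((n m + τ m - τ (j + 1)).factorial : ℝ) *
                ((τ (j + 1) - n j - τ j - 1).factorial : ℝ))) *
          ∫ u in Set.pi Set.univ (fun _ : Fin (m - 1) => Set.Icc (0 : ℝ) 1),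
            ∏ j : Fin (m - 1),
              (1 - y * ∏ i ∈ Finset.univ.filter fun i : Fin (m - 1) => j ≤ i, u i) ^
                  (n (j.1 + 1)) *
                u j ^ (n m + τ m - τ (j.1 + 2)) *
                (1 - u j) ^ (τ (j.1 + 2) - n (j.1 + 1) - τ (j.1 + 1) - 1)) ∧
    ∀ y ∈ Set.Icc (0 : ℝ) 1, 0 ≤ Q m n τ y ∧ Q m n τ y ≤ 1 :=
  stmt_19_general m n τ hup hlow
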